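/- arXiv:0904.0968 — 2 statements merged into one kernel-verified Lean document; each statement's English description precedes it below -/
import Mathlib

section
/- For the Tits form q of the extended Dynkin graph D̃4 (center 0, leaves 1,…,4), every integer vector α with q(α) ≤ 1 and α ≠ 0 is either positive (all coordinates ≥ 0) or negative (all coordinates ≤ 0). -/
/-- Tits form of the extended Dynkin graph D̃₄ (center = vertex 0, leaves = 1,2,3,4). -/
def qD4Z (x : Fin 5 → ℤ) : ℤ :=
  (∑ i, x i ^ 2) - x 0 * (x 1 + x 2 + x 3 + x 4)

/-!
Completing the square at the centre gives `4 q(x) = ∑ᵢ (2 xᵢ - x₀)²` over the four leaves, so a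
root has `|2 xᵢ - x₀| ≤ 2` for every leaf `i`. If `x₀ ≠ 0` this forces every leaf to have the
sign of `x₀`. If `x₀ = 0` then `q(x) = ∑ xᵢ²`, so a root has at most one nonzero coordinate.
-/

theorem Int.forall_nonneg_or_forall_nonpos_of_sum_sq_le_one {ι : Type*} [Fintype ι]
    (x : ι → ℤ) (h : ∑ i, x i ^ 2 ≤ 1) : (∀ i, 0 ≤ x i) ∨ (∀ i, x i ≤ 0) := by
  classical
  by_contra! hmixed
  obtain ⟨⟨i, hi⟩, ⟨j, hj⟩⟩ := hmixed
  have hij : i ≠ j := by rintro rfl; omega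
  have hpair : x i ^ 2 + x j ^ 2 ≤ ∑ k, x k ^ 2 := by
    rw [← Finset.sum_pair (f := fun k => x k ^ 2) hij]
    exact Finset.sum_le_sum_of_subset_of_nonneg (Finset.subset_univ _)
      fun k _ _ => sq_nonneg (x k)
  nlinarith

theorem Int.nonneg_of_sq_two_mul_sub_le_four {a c : ℤ} (hc : 0 < c) (h : (2 * a - c) ^ 2 ≤ 4) :
    0 ≤ a := by
  nlinarith

theorem qD4Z_neg (x : Fin 5 → ℤ) : qD4Z (-x) = qD4Z x := by
  simp only [qD4Z, Pi.neg_apply, neg_sq]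
  ring

theorem four_mul_qD4Z (x : Fin 5 → ℤ) :
    4 * qD4Z x = ∑ j : Fin 4, (2 * x j.succ - x 0) ^ 2 := by
  simp only [qD4Z, Fin.sum_univ_five, Fin.sum_univ_four, Fin.reduceSucc]
  ring

theorem sq_two_mul_leaf_sub_center_le_four {x : Fin 5 → ℤ} (hq : qD4Z x ≤ 1) (j : Fin 4) :
    (2 * x j.succ - x 0) ^ 2 ≤ 4 :=
  calc (2 * x j.succ - x 0) ^ 2
      ≤ ∑ k : Fin 4, (2 * x k.succ - x 0) ^ 2 :=
        Finset.single_le_sum (fun k _ => sq_nonneg (2 * x k.succ - x 0)) (Finset.mem_univ j)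
    _ = 4 * qD4Z x := (four_mul_qD4Z x).symm
    _ ≤ 4 := by omega

theorem nonneg_of_qD4Z_le_one_of_center_pos {x : Fin 5 → ℤ} (hq : qD4Z x ≤ 1) (h0 : 0 < x 0)
    (i : Fin 5) : 0 ≤ x i := by
  cases i using Fin.cases with
  | zero => exact h0.le
  | succ j => exact Int.nonneg_of_sq_two_mul_sub_le_four h0 (sq_two_mul_leaf_sub_center_le_four hq j)

theorem stmt1_general (α : Fin 5 → ℤ) (hroot : qD4Z α ≤ 1) :
    (∀ i, 0 ≤ α i) ∨ (∀ i, α i ≤ 0) := by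
  rcases lt_trichotomy (α 0) 0 with hneg | hzero | hpos
  · have hnegα : ∀ i, 0 ≤ (-α) i :=
      nonneg_of_qD4Z_le_one_of_center_pos (by rwa [qD4Z_neg]) (by simpa using hneg)
    exact Or.inr fun i => by simpa using hnegα i
  · apply Int.forall_nonneg_or_forall_nonpos_of_sum_sq_le_one
    simpa [qD4Z, hzero] using hroot
  · exact Or.inl (nonneg_of_qD4Z_le_one_of_center_pos hroot hpos)

theorem stmt1 (α : Fin 5 → ℤ) (hne : α ≠ 0) (hroot : qD4Z α ≤ 1) :
    (∀ i, 0 ≤ α i) ∨ (∀ i, α i ≤ 0) :=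
  stmt1_general α hroot
end

section
/- For the extended Dynkin graph Ẽ6, the linear functional ω(α_1,α_2;β_1,β_2;γ_1,γ_2) = (α_1+α_2+β_1+β_2+γ_1+γ_2)/3 is invariant with respect to the functor TS on reduced characters: if S maps (χ,λ) to (χ',λ') with λ' = α_1 + β_1 + γ_1 − λ and χ' obtained by the rule χ' = (α_1−α_0, α_1−α_2; β_1−β_0, β_1−β_2; γ_1−γ_0, γ_1−γ_2) with α_0 = β_0 = γ_0 = 0, and T maps (χ',λ') to (χ'',λ') with χ'' = (λ'−α'_2, λ'−α'_1; λ'−β'_2, λ'−β'_1; λ'−γ'_2, λ'−γ'_1), then ω(χ'') = λ' whenever λ = ω(χ). -/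
theorem stmt15_general (a1 a2 b1 b2 c1 c2 lam : ℝ)
    (hlam : lam = (a1 + a2 + b1 + b2 + c1 + c2) / 3)
    (lam' a1' a2' b1' b2' c1' c2' : ℝ)
    (hlam' : lam' = a1 + b1 + c1 - lam)
    (ha1' : a1' = a1 - 0) (ha2' : a2' = a1 - a2)
    (hb1' : b1' = b1 - 0) (hb2' : b2' = b1 - b2)
    (hc1' : c1' = c1 - 0) (hc2' : c2' = c1 - c2)
    (a1'' a2'' b1'' b2'' c1'' c2'' : ℝ)
    (ha1'' : a1'' = lam' - a2') (ha2'' : a2'' = lam' - a1')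
    (hb1'' : b1'' = lam' - b2') (hb2'' : b2'' = lam' - b1')
    (hc1'' : c1'' = lam' - c2') (hc2'' : c2'' = lam' - c1') :
    (a1'' + a2'' + b1'' + b2'' + c1'' + c2'') / 3 = lam' := by
  subst_vars
  ring

/-- Invariance of the functional ω for Ẽ₆ under the induced action TS of the Coxeter
functors on reduced characters: with λ = ω(χ), S sends (χ,λ) to (χ',λ') with
λ' = α₁+β₁+γ₁−λ and χ' = (α₁−α₀, α₁−α₂; β₁−β₀, β₁−β₂; γ₁−γ₀, γ₁−γ₂) (α₀=β₀=γ₀=0),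
and T sends (χ',λ') to (χ'',λ') with
χ'' = (λ'−α'₂, λ'−α'₁; λ'−β'₂, λ'−β'₁; λ'−γ'₂, λ'−γ'₁); then ω(χ'') = λ'. -/
theorem stmt15 (a1 a2 b1 b2 c1 c2 lam : ℝ)
    (ha : 0 < a2 ∧ a2 < a1) (hb : 0 < b2 ∧ b2 < b1) (hc : 0 < c2 ∧ c2 < c1)
    (hlam : lam = (a1 + a2 + b1 + b2 + c1 + c2) / 3)
    (lam' a1' a2' b1' b2' c1' c2' : ℝ)
    (hlam' : lam' = a1 + b1 + c1 - lam)
    (ha1' : a1' = a1 - 0) (ha2' : a2' = a1 - a2)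
    (hb1' : b1' = b1 - 0) (hb2' : b2' = b1 - b2)
    (hc1' : c1' = c1 - 0) (hc2' : c2' = c1 - c2)
    (a1'' a2'' b1'' b2'' c1'' c2'' : ℝ)
    (ha1'' : a1'' = lam' - a2') (ha2'' : a2'' = lam' - a1')
    (hb1'' : b1'' = lam' - b2') (hb2'' : b2'' = lam' - b1')
    (hc1'' : c1'' = lam' - c2') (hc2'' : c2'' = lam' - c1') :
    (a1'' + a2'' + b1'' + b2'' + c1'' + c2'') / 3 = lam' :=
  stmt15_general a1 a2 b1 b2 c1 c2 lam hlam lam' a1' a2' b1' b2' c1' c2' hlam' ha1' ha2' hb1' hb2'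
    hc1' hc2' a1'' a2'' b1'' b2'' c1'' c2'' ha1'' ha2'' hb1'' hb2'' hc1'' hc2''
end
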